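/- Let F be a free group of finite rank n ≥ 2. Then for every k ∈ ℕ there exists a family H₁, …, H_k of subgroups of F forming a malnormal collection, such that each H_i is free of rank 2 (i.e. there is an injective homomorphism from the free group on two generators onto H_i) and each H_i has infinite index in F. -/

import Mathlib

/-!
Fix distinct basis letters `a`, `b` and `m ≥ 1`, and map the free group on `x₀, x₁` by
`x₀ ↦ a a (b a)ᵐ b b`, `x₁ ↦ b b (a b)ᵐ a a`. The four blocks of `x₀^±1`, `x₁^±1` start and end with
letters that cancel only between a block and its inverse, so a reduced word maps to the plain
concatenation of its blocks: the map is injective, and no positive power of `a` lies in its image,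
which therefore has infinite index.

If `g` conjugates a nontrivial element of the `m`-th image into the `m'`-th one, cyclically reduce
both. Conjugate cyclically reduced words are rotations of each other, the conjugator being a
power of the word times the rotated piece. A square followed by two changes of letter occurs in a
concatenation of blocks only where a block starts, so the rotation cuts at a block boundary. The
first block then forces `m = m'`, and the conjugator, hence `g`, lies in the image.
-/

/-- The conjugate subgroup `g H g⁻¹`. -/
def conjSubgroup {G : Type*} [Group G] (g : G) (H : Subgroup G) : Subgroup G :=
  H.map (MulAut.conj g).toMonoidHom

/-- A family of subgroups is a malnormal collection if
`g H i g⁻¹ ∩ H j ≠ {1}` implies `i = j` and `g ∈ H i`. -/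
def IsMalnormalCollection {G : Type*} [Group G] {ι : Type*} (H : ι → Subgroup G) : Prop :=
  ∀ (i j : ι) (g : G), conjSubgroup g (H i) ⊓ H j ≠ ⊥ → i = j ∧ g ∈ H i

open List

section Marker

variable {β γ : Type*}

def StartsWithMarker (l : List γ) : Prop :=
  ∃ z y w r, l = z :: z :: y :: w :: r ∧ z ≠ y ∧ y ≠ w

theorem StartsWithMarker.append {l : List γ} (h : StartsWithMarker l) (l' : List γ) :
    StartsWithMarker (l ++ l') := by
  obtain ⟨z, y, w, r, rfl, hzy, hyw⟩ := h
  exact ⟨z, y, w, r ++ l', rfl, hzy, hyw⟩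

theorem StartsWithMarker.ne_nil {l : List γ} (h : StartsWithMarker l) : l ≠ [] := by
  obtain ⟨z, y, w, r, rfl, -⟩ := h
  simp

def MarkerSynchronizing (code : β → List γ) : Prop :=
  ∀ σ (u : List β) P C, code σ = P ++ C → P ≠ [] → C ≠ [] → ¬ StartsWithMarker (C ++ u.flatMap code)

theorem MarkerSynchronizing.exists_eq_flatMap {code : β → List γ} (hcode : MarkerSynchronizing code)
    {u : List β} {P Q : List γ} (h : u.flatMap code = P ++ Q) (hQ : StartsWithMarker Q) :
    ∃ u₁ u₂, u = u₁ ++ u₂ ∧ P = u₁.flatMap code := by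
  induction u generalizing P with
  | nil => exact absurd (append_eq_nil_iff.mp h.symm).2 hQ.ne_nil
  | cons σ u ih =>
    rw [flatMap_cons] at h
    rcases append_eq_append_iff.mp h with ⟨P', rfl, hu⟩ | ⟨C, hσ, rfl⟩
    · obtain ⟨u₁, u₂, rfl, rfl⟩ := ih hu
      exact ⟨σ :: u₁, u₂, rfl, by simp⟩
    · rcases eq_or_ne P [] with rfl | hP
      · exact ⟨[], σ :: u, rfl, rfl⟩
      rcases eq_or_ne C [] with rfl | hC
      · exact ⟨[σ], u, rfl, by simpa using hσ.symm⟩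
      exact absurd hQ (hcode σ u P C hσ hP hC)

end Marker

section Block

variable {γ : Type*} {c d : γ}

def block (c d : γ) (m : ℕ) : List γ := [c, c] ++ (replicate m [d, c]).flatten ++ [d, d]

theorem block_eq_cons_cons (c d : γ) (m : ℕ) :
    block c d m = c :: c :: ((replicate m [d, c]).flatten ++ [d, d]) := by
  simp [block]

theorem mem_block {x : γ} {m : ℕ} (hx : x ∈ block c d m) : x = c ∨ x = d := by
  simp only [block, mem_append, mem_flatten, mem_replicate] at hx
  grind

theorem startsWithMarker_block_append (hcd : c ≠ d) {m : ℕ} (hm : 0 < m) (l : List γ) :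
    StartsWithMarker (block c d m ++ l) := by
  obtain ⟨m, rfl⟩ := Nat.exists_eq_add_of_lt hm
  refine ⟨c, d, c, (replicate m [d, c]).flatten ++ [d, d] ++ l, ?_, hcd, hcd.symm⟩
  simp [block, replicate_succ]

theorem eq_of_replicate_append_eq (hcd : c ≠ d) {l l' : List γ} :
    ∀ {m m' : ℕ}, (replicate m [d, c]).flatten ++ d :: d :: l =
      (replicate m' [d, c]).flatten ++ d :: d :: l' → m = m'
  | 0, 0, _ => rfl
  | 0, _ + 1, h => by
    simp only [replicate_succ, replicate_zero, flatten_cons, flatten_nil, cons_append, nil_append,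
      cons.injEq, true_and] at h
    exact absurd h.1 hcd.symm
  | _ + 1, 0, h => by
    simp only [replicate_succ, replicate_zero, flatten_cons, flatten_nil, cons_append, nil_append,
      cons.injEq, true_and] at h
    exact absurd h.1 hcd
  | _ + 1, _ + 1, h => by
    simp only [replicate_succ, flatten_cons, cons_append, cons.injEq, true_and] at h
    rw [eq_of_replicate_append_eq hcd h]

theorem eq_of_block_append_eq (hcd : c ≠ d) {c' d' : γ} {m m' : ℕ} {l l' : List γ}
    (h : block c d m ++ l = block c' d' m' ++ l') : m = m' := by
  obtain ⟨rfl, rfl⟩ : c = c' ∧ d = d' := by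
    cases m <;> cases m' <;> simp [block, replicate_succ] at h <;> tauto
  simp only [block, append_assoc, cons_append, nil_append, cons.injEq, true_and] at h
  exact eq_of_replicate_append_eq hcd h

theorem eq_singleton_or_eq_pair_or_exists_ne_of_append_eq (hcd : c ≠ d) {C : List γ} (hC : C ≠ []) :
    ∀ (m : ℕ) (P : List γ), P ++ C = c :: ((replicate m [d, c]).flatten ++ [d, d]) →
      C = [d] ∨ C = [d, d] ∨ ∃ x y r, C = x :: y :: r ∧ x ≠ y
  | 0, P, h => by
    rcases P with _ | ⟨p, _ | ⟨p', _ | ⟨p'', _ | ⟨p''', P⟩⟩⟩⟩ <;> simp at h <;> grind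
  | m + 1, P, h => by
    rw [replicate_succ, flatten_cons] at h
    rcases P with _ | ⟨p, _ | ⟨p', P⟩⟩
    · exact Or.inr (Or.inr ⟨c, d, _, by simpa using h, hcd⟩)
    · simp only [cons_append, nil_append, cons.injEq] at h
      exact Or.inr (Or.inr ⟨d, c, _, h.2, hcd.symm⟩)
    · simp only [cons_append, cons.injEq] at h
      exact eq_singleton_or_eq_pair_or_exists_ne_of_append_eq hcd hC m P (by simpa using h.2.2)

theorem not_startsWithMarker_of_append_eq_block (hcd : c ≠ d) {m : ℕ} {P C Q : List γ}
    (h : P ++ C = block c d m) (hP : P ≠ []) (hC : C ≠ []) (hQ : Q = [] ∨ ∃ e r, Q = e :: e :: r) :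
    ¬ StartsWithMarker (C ++ Q) := by
  obtain ⟨p, P, rfl⟩ := exists_cons_of_ne_nil hP
  rw [block_eq_cons_cons, cons_append, cons.injEq] at h
  rintro ⟨z, y, w, r, hzr, hzy, hyw⟩
  rcases eq_singleton_or_eq_pair_or_exists_ne_of_append_eq hcd hC m P h.2
    with rfl | rfl | ⟨x, x', r', rfl, hxx'⟩
  · rcases hQ with rfl | ⟨e, r, rfl⟩ <;> simp at hzr
    grind
  · rcases hQ with rfl | ⟨e, r, rfl⟩ <;> simp at hzr
    grind
  · simp_all

end Block

namespace FreeGroup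

variable {α : Type*} {L L₁ L₂ X Y : List (α × Bool)}

theorem IsReduced.toWord_mk [DecidableEq α] (h : IsReduced L) : (mk L).toWord = L := by
  rw [FreeGroup.toWord_mk, h.reduce_eq]

theorem IsReduced.eq_of_mk_eq [DecidableEq α] (h₁ : IsReduced L₁) (h₂ : IsReduced L₂)
    (h : mk L₁ = mk L₂) : L₁ = L₂ := by
  rw [← h₁.toWord_mk, ← h₂.toWord_mk, h]

theorem IsReduced.invRev (h : IsReduced L) : IsReduced (invRev L) := by
  classical
  have := isReduced_toWord (x := (mk L)⁻¹)
  rwa [toWord_inv, h.toWord_mk] at this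

theorem IsCyclicallyReduced.invRev (h : IsCyclicallyReduced L) :
    IsCyclicallyReduced (invRev L) := by
  refine ⟨h.isReduced.invRev, fun x hx y hy hxy => ?_⟩
  simp only [FreeGroup.invRev, getLast?_reverse, head?_reverse, head?_map, getLast?_map,
    Option.mem_def, Option.map_eq_some_iff] at hx hy
  obtain ⟨x', hx', rfl⟩ := hx
  obtain ⟨y', hy', rfl⟩ := hy
  simpa using (h.2 y' hy' x' hx' hxy.symm).symm

theorem IsCyclicallyReduced.append_singleton_of_cons {x : α × Bool}
    (h : IsCyclicallyReduced (x :: L)) : IsCyclicallyReduced (L ++ [x]) := by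
  obtain ⟨hred, hcyc⟩ := h
  refine ⟨List.isChain_append.mpr ⟨hred.tail, IsReduced.singleton, fun y hy z hz => ?_⟩,
    fun y hy z hz => ?_⟩
  · simp only [head?_cons, Option.mem_def, Option.some.injEq] at hz
    subst hz
    exact hcyc y (by cases L <;> simp_all) x (by simp)
  · simp only [getLast?_concat, Option.mem_def, Option.some.injEq] at hy
    subst hy
    cases L with
    | nil => simp_all
    | cons w L => simp_all [isReduced_cons_cons]

theorem not_isCyclicallyReduced_append_invRev (h : L₁ ≠ []) :
    ¬ IsCyclicallyReduced (L₁ ++ L₂ ++ invRev L₁) := by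
  obtain ⟨x, L, rfl⟩ := exists_cons_of_ne_nil h
  have : x :: L ++ L₂ ++ invRev (x :: L) = x :: (L ++ L₂ ++ invRev L) ++ [(x.1, !x.2)] := by
    simp [FreeGroup.invRev]
  rw [this, isCyclicallyReduced_cons_append_iff]
  simp

theorem IsReduced.append_of_not_cancel {c : α × Bool} (hL : IsReduced (L ++ [c]))
    (hX : IsReduced X) (hc : ∀ X', X ≠ (c.1, !c.2) :: X') : IsReduced (L ++ [c] ++ X) := by
  refine List.isChain_append.mpr ⟨hL, hX, fun x hx y hy hxy => ?_⟩
  simp only [getLast?_concat, Option.mem_def, Option.some.injEq] at hx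
  subst hx
  obtain ⟨X', rfl⟩ : ∃ X', X = y :: X' := by
    cases X with
    | nil => simp at hy
    | cons z X' => exact ⟨X', by simp_all⟩
  by_contra hne
  exact hc X' (by simp [Prod.ext_iff, hxy, Bool.eq_not.mpr (Ne.symm hne)])

def IsRotationConj (f : FreeGroup α) (X Y : List (α × Bool)) : Prop :=
  ∃ (k : ℤ) (s t : List (α × Bool)), X = s ++ t ∧ Y = t ++ s ∧ f = mk Y ^ k * mk t

theorem isRotationConj_one_self (X : List (α × Bool)) : IsRotationConj 1 X X :=
  ⟨0, X, [], by simp, by simp, by simp [one_eq_mk]⟩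

theorem IsRotationConj.of_invRev {f : FreeGroup α}
    (h : IsRotationConj f (invRev X) (invRev Y)) : IsRotationConj f X Y := by
  obtain ⟨k, s, t, hX, hY, rfl⟩ := h
  have hX' : X = invRev t ++ invRev s := by rw [← invRev_invRev (L₁ := X), hX, invRev_append]
  have hY' : Y = invRev s ++ invRev t := by rw [← invRev_invRev (L₁ := Y), hY, invRev_append]
  have ht : mk t = (mk Y)⁻¹ * (mk s)⁻¹ := by
    rw [inv_mk, hY, ← mul_mk]
    group
  refine ⟨-k - 1, invRev t, invRev s, hX', hY', ?_⟩
  rw [← inv_mk, ← inv_mk, ht]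
  group

theorem IsRotationConj.mul_inv_mk_singleton {f : FreeGroup α} {x : α × Bool}
    (h : IsRotationConj f (X ++ [x]) Y) : IsRotationConj (f * (mk [x])⁻¹) (x :: X) Y := by
  obtain ⟨k, s, t, hX, rfl, rfl⟩ := h
  rcases eq_nil_or_concat' t with rfl | ⟨t, z, rfl⟩
  · obtain rfl : s = X ++ [x] := by simpa using hX.symm
    refine ⟨k - 1, [x], X, rfl, by simp, ?_⟩
    rw [nil_append, ← mul_mk, zpow_sub_one, ← one_eq_mk]
    group
  · obtain ⟨rfl, hxz⟩ := append_inj' (hX.trans (append_assoc _ _ _).symm) rfl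
    obtain rfl : x = z := by simpa using hxz
    refine ⟨k, x :: s, t, rfl, by simp, ?_⟩
    rw [← mul_mk (L₁ := t)]
    group

theorem mk_conj_ne_of_not_cancel [DecidableEq α] {F : List (α × Bool)} {c : α × Bool}
    (hF : IsReduced (F ++ [c])) (hX : IsCyclicallyReduced X) (hX₀ : X ≠ [])
    (h₁ : ∀ X', X ≠ (c.1, !c.2) :: X') (h₂ : ∀ X', invRev X ≠ (c.1, !c.2) :: X')
    (hY : IsCyclicallyReduced Y) : mk (F ++ [c]) * mk X * (mk (F ++ [c]))⁻¹ ≠ mk Y := by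
  intro h
  have hW : IsReduced (F ++ [c] ++ X ++ invRev (F ++ [c])) := by
    refine (hF.append_of_not_cancel hX.isReduced h₁).append_overlap ?_ hX₀
    have := (hF.append_of_not_cancel hX.invRev.isReduced h₂).invRev
    rwa [invRev_append, invRev_invRev] at this
  have hWY : F ++ [c] ++ X ++ invRev (F ++ [c]) = Y :=
    hW.eq_of_mk_eq hY.isReduced (by rw [← mul_mk, ← mul_mk, ← inv_mk, h])
  exact not_isCyclicallyReduced_append_invRev (by simp) (hWY ▸ hY)

theorem isRotationConj_of_conj [DecidableEq α] (hX : IsCyclicallyReduced X) (hX₀ : X ≠ [])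
    (hY : IsCyclicallyReduced Y) {f : FreeGroup α} (h : f * mk X * f⁻¹ = mk Y) :
    IsRotationConj f X Y := by
  suffices key : ∀ F : List (α × Bool), IsReduced F → ∀ X Y, IsCyclicallyReduced X → X ≠ [] →
      IsCyclicallyReduced Y → mk F * mk X * (mk F)⁻¹ = mk Y → IsRotationConj (mk F) X Y by
    simpa only [mk_toWord] using key f.toWord isReduced_toWord X Y hX hX₀ hY (by rwa [mk_toWord])
  intro F
  induction F using List.reverseRecOn with
  | nil =>
    intro _ X Y hX _ hY h
    obtain rfl : X = Y := hX.isReduced.eq_of_mk_eq hY.isReduced (by simpa [← one_eq_mk] using h)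
    simpa [← one_eq_mk] using isRotationConj_one_self X
  | append_singleton F c ih =>
    intro hF X Y hX hX₀ hY h
    have rotate : ∀ X Y, IsCyclicallyReduced X → IsCyclicallyReduced Y →
        mk (F ++ [c]) * mk X * (mk (F ++ [c]))⁻¹ = mk Y → (∃ X', X = (c.1, !c.2) :: X') →
        IsRotationConj (mk (F ++ [c])) X Y := by
      rintro X Y hX hY h ⟨X', rfl⟩
      have hc : mk (F ++ [c]) = mk F * (mk [(c.1, !c.2)])⁻¹ := by
        rw [inv_mk, mul_mk]
        simp [FreeGroup.invRev]
      rw [hc] at h ⊢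
      refine (ih (hF.infix ⟨[], [c], by simp⟩) (X' ++ [_]) Y hX.append_singleton_of_cons
        (by simp) hY ?_).mul_inv_mk_singleton
      rw [← h, ← mul_mk, show (c.1, !c.2) :: X' = [(c.1, !c.2)] ++ X' from rfl, ← mul_mk]
      group
    by_cases h₁ : ∃ X', X = (c.1, !c.2) :: X'
    · exact rotate X Y hX hY h h₁
    -- `c` cancelling against the last letter of `X` is the same case for the inverse words
    by_cases h₂ : ∃ X', invRev X = (c.1, !c.2) :: X'
    · refine (rotate _ _ hX.invRev hY.invRev ?_ h₂).of_invRev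
      rw [← inv_mk, ← inv_mk, ← h]
      group
    push Not at h₁ h₂
    exact absurd h (mk_conj_ne_of_not_cancel hF hX hX₀ h₁ h₂ hY)

theorem exists_eq_conj_mk_isCyclicallyReduced [DecidableEq α] (w : FreeGroup α) :
    ∃ h R, IsCyclicallyReduced R ∧ w = h * mk R * h⁻¹ := by
  refine ⟨mk (reduceCyclically.conjugator w.toWord), reduceCyclically w.toWord,
    reduceCyclically.isCyclicallyReduced isReduced_toWord, ?_⟩
  conv_lhs =>
    rw [← mk_toWord (x := w), ← reduceCyclically.conj_conjugator_reduceCyclically w.toWord]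
  rw [inv_mk, mul_mk, mul_mk]

theorem invRev_block (c d : α × Bool) (m : ℕ) :
    invRev (block c d m) = block (d.1, !d.2) (c.1, !c.2) m := by
  simp [block, FreeGroup.invRev, reverse_flatten, map_flatten, map_replicate, reverse_replicate]

theorem isReduced_block {c d : α × Bool} (hcd : c.1 ≠ d.1) (m : ℕ) : IsReduced (block c d m) := by
  refine (pairwise_of_forall_mem_list fun x hx y hy hxy => ?_).isChain
  rcases mem_block hx with rfl | rfl <;> rcases mem_block hy with rfl | rfl <;> simp_all [eq_comm]

variable (a b : α)

def headLetter : Fin 2 × Bool → α × Bool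
  | (i, true) => (![a, b] i, true)
  | (i, false) => (![b, a] i, false)

def lastLetter : Fin 2 × Bool → α × Bool
  | (i, true) => (![b, a] i, true)
  | (i, false) => (![a, b] i, false)

def code (m : ℕ) (σ : Fin 2 × Bool) : List (α × Bool) :=
  block (headLetter a b σ) (lastLetter a b σ) m

variable {a b}

theorem headLetter_fst_ne_lastLetter_fst (hab : a ≠ b) (σ : Fin 2 × Bool) :
    (headLetter a b σ).1 ≠ (lastLetter a b σ).1 := by
  rcases σ with ⟨i, _ | _⟩ <;> fin_cases i <;> simp [headLetter, lastLetter, hab, hab.symm]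

theorem IsReduced.lastLetter_headLetter (hab : a ≠ b) {σ τ : Fin 2 × Bool}
    (h : IsReduced [σ, τ]) : IsReduced [lastLetter a b σ, headLetter a b τ] := by
  rcases σ with ⟨i, _ | _⟩ <;> rcases τ with ⟨j, _ | _⟩ <;> fin_cases i <;> fin_cases j <;>
    simp_all [isReduced_cons_cons, headLetter, lastLetter, hab.symm]

theorem invRev_code (m : ℕ) (σ : Fin 2 × Bool) :
    invRev (code a b m σ) = code a b m (σ.1, !σ.2) := by
  rcases σ with ⟨i, _ | _⟩ <;> simp [code, invRev_block, headLetter, lastLetter]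

theorem code_ne_nil (m : ℕ) (σ : Fin 2 × Bool) : code a b m σ ≠ [] := by
  simp [code, block]

theorem flatMap_code_eq_nil_iff {m : ℕ} {l : List (Fin 2 × Bool)} :
    l.flatMap (code a b m) = [] ↔ l = [] := by
  cases l <;> simp [code_ne_nil]

theorem head?_code (m : ℕ) (σ : Fin 2 × Bool) : (code a b m σ).head? = some (headLetter a b σ) := by
  simp [code, block]

theorem getLast?_code (m : ℕ) (σ : Fin 2 × Bool) :
    (code a b m σ).getLast? = some (lastLetter a b σ) := by
  rw [code, block, getLast?_append_of_ne_nil _ (by simp)]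
  rfl

theorem isReduced_flatMap_code (hab : a ≠ b) (m : ℕ) {l : List (Fin 2 × Bool)}
    (hl : IsReduced l) : IsReduced (l.flatMap (code a b m)) := by
  rw [IsReduced, flatMap_def, isChain_flatten (by simp [code_ne_nil]), isChain_map]
  refine ⟨fun _ hw => ?_, hl.imp fun σ τ h x hx y hy => ?_⟩
  · obtain ⟨σ, -, rfl⟩ := mem_map.mp hw
    exact isReduced_block (headLetter_fst_ne_lastLetter_fst hab σ) m
  rw [getLast?_code, Option.mem_some_iff] at hx
  rw [head?_code, Option.mem_some_iff] at hy
  subst hx hy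
  simpa [isReduced_cons_cons] using
    IsReduced.lastLetter_headLetter hab (isReduced_cons_cons.mpr ⟨h, .singleton⟩)

theorem isCyclicallyReduced_flatMap_code (hab : a ≠ b) (m : ℕ) {l : List (Fin 2 × Bool)}
    (hl : IsCyclicallyReduced l) : IsCyclicallyReduced (l.flatMap (code a b m)) := by
  refine ⟨isReduced_flatMap_code hab m hl.isReduced, fun x hx y hy => ?_⟩
  rcases eq_nil_or_concat' l with rfl | ⟨l', σ, rfl⟩
  · simp at hx
  obtain ⟨τ, l'', hτ⟩ := exists_cons_of_ne_nil (show l' ++ [σ] ≠ [] by simp)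
  simp only [getLast?_flatMap, reverse_concat, findSome?_cons, getLast?_code,
    Option.mem_some_iff] at hx
  simp only [hτ, head?_flatMap, findSome?_cons, head?_code, Option.mem_some_iff] at hy
  subst hx hy
  simpa [isReduced_cons_cons] using IsReduced.lastLetter_headLetter hab
    (isReduced_cons_cons.mpr ⟨hl.2 σ (by simp) τ (by simp [hτ]), .singleton⟩)

theorem markerSynchronizing_code (hab : a ≠ b) (m : ℕ) : MarkerSynchronizing (code a b m) := by
  intro σ u P C h hP hC
  refine not_startsWithMarker_of_append_eq_block (c := headLetter a b σ) (d := lastLetter a b σ)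
    (fun he => headLetter_fst_ne_lastLetter_fst hab σ (congrArg Prod.fst he)) h.symm hP hC ?_
  cases u with
  | nil => exact Or.inl rfl
  | cons τ u =>
    exact Or.inr ⟨_, _, by rw [flatMap_cons, code, block_eq_cons_cons, cons_append, cons_append]⟩

theorem startsWithMarker_flatMap_code (hab : a ≠ b) {m : ℕ} (hm : 0 < m)
    {u : List (Fin 2 × Bool)} (hu : u ≠ []) : StartsWithMarker (u.flatMap (code a b m)) := by
  obtain ⟨τ, u, rfl⟩ := exists_cons_of_ne_nil hu
  exact startsWithMarker_block_append
    (fun he => headLetter_fst_ne_lastLetter_fst hab τ (congrArg Prod.fst he)) hm _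

variable (a b) in
def blockHom (m : ℕ) : FreeGroup (Fin 2) →* FreeGroup α :=
  FreeGroup.lift fun i => mk (code a b m (i, true))

theorem blockHom_mk (m : ℕ) (l : List (Fin 2 × Bool)) :
    blockHom a b m (mk l) = mk (l.flatMap (code a b m)) := by
  induction l with
  | nil => simp [← one_eq_mk]
  | cons σ l ih =>
    rw [show mk (σ :: l) = mk [σ] * mk l from (mul_mk (L₁ := [σ])).symm, _root_.map_mul, ih,
      flatMap_cons, ← mul_mk]
    congr 1
    rcases σ with ⟨i, _ | _⟩
    · rw [show mk [(i, false)] = (of i)⁻¹ from rfl, _root_.map_inv, blockHom, lift_apply_of, inv_mk,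
        invRev_code]
      rfl
    · exact lift_apply_of

theorem toWord_blockHom [DecidableEq α] (hab : a ≠ b) (m : ℕ) (w : FreeGroup (Fin 2)) :
    (blockHom a b m w).toWord = w.toWord.flatMap (code a b m) := by
  conv_lhs => rw [← mk_toWord (x := w), blockHom_mk]
  exact (isReduced_flatMap_code hab m isReduced_toWord).toWord_mk

theorem blockHom_injective (hab : a ≠ b) (m : ℕ) : Function.Injective (blockHom a b m) := by
  classical
  refine (injective_iff_map_eq_one _).mpr fun w hw => toWord_eq_nil_iff.mp ?_
  have := congrArg toWord hw
  rwa [toWord_blockHom hab, toWord_one, flatMap_code_eq_nil_iff] at this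

theorem index_range_blockHom (hab : a ≠ b) (m : ℕ) : (blockHom a b m).range.index = 0 := by
  classical
  by_contra hindex
  obtain ⟨n, hn, -, w, hw⟩ := Subgroup.exists_pow_mem_of_index_ne_zero hindex (of a)
  have hword := congrArg toWord hw
  rw [toWord_blockHom hab, toWord_of_pow] at hword
  obtain ⟨σ, l, hσ⟩ : ∃ σ l, w.toWord = σ :: l := by
    cases h : w.toWord with
    | nil =>
      rw [h, flatMap_nil, eq_comm, replicate_eq_nil_iff] at hword
      omega
    | cons σ l => exact ⟨σ, l, rfl⟩
  have hmem : ∀ x ∈ code a b m σ, x = (a, true) := fun x hx =>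
    eq_of_mem_replicate (hword ▸ mem_flatMap.mpr ⟨σ, by simp [hσ], hx⟩)
  apply headLetter_fst_ne_lastLetter_fst hab σ
  rw [hmem (headLetter a b σ) (by simp [code, block]),
    hmem (lastLetter a b σ) (by simp [code, block])]

theorem eq_and_exists_eq_flatMap_of_rotation (hab : a ≠ b) {m₁ m₂ : ℕ} (hm₂ : 0 < m₂)
    {R R' : List (Fin 2 × Bool)} {d e : List (α × Bool)} (hR : R ≠ [])
    (h₁ : R.flatMap (code a b m₁) = d ++ e) (h₂ : R'.flatMap (code a b m₂) = e ++ d) :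
    m₁ = m₂ ∧ ∃ v : List (Fin 2 × Bool), e = v.flatMap (code a b m₁) := by
  have hR' : R' ≠ [] := by
    rintro rfl
    obtain ⟨rfl, rfl⟩ := append_eq_nil_iff.mp h₂.symm
    exact hR (flatMap_code_eq_nil_iff.mp h₁)
  -- `R ++ R` codes to `d ++ (e ++ d) ++ e`, and `e ++ d` starts with a marker
  obtain ⟨u₁, u₂, hu, rfl⟩ := (markerSynchronizing_code hab m₁).exists_eq_flatMap
    (u := R ++ R) (P := d) (by rw [flatMap_append, h₁, h₂]; simp)
    ((startsWithMarker_flatMap_code hab hm₂ hR').append e)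
  obtain ⟨v, w, rfl, hw⟩ : ∃ v w : List (Fin 2 × Bool), e = v.flatMap (code a b m₁) ∧
      R'.flatMap (code a b m₂) = w.flatMap (code a b m₁) := by
    rcases append_eq_append_iff.mp hu with ⟨v, rfl, -⟩ | ⟨v, rfl, -⟩
    · obtain rfl : e = [] := by
        have := congrArg length h₁
        simp only [flatMap_append, length_append] at this
        exact eq_nil_of_length_eq_zero (by omega)
      exact ⟨[], R, rfl, by rw [h₂, h₁]; simp⟩
    · rw [flatMap_append, append_cancel_left_eq] at h₁
      exact ⟨v, v ++ u₁, h₁.symm, by rw [h₂, ← h₁, flatMap_append]⟩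
  refine ⟨?_, v, rfl⟩
  obtain ⟨τ, R', rfl⟩ := exists_cons_of_ne_nil hR'
  obtain ⟨σ, w, rfl⟩ : ∃ σ w', w = σ :: w' := by
    cases w with
    | nil => exact absurd (flatMap_code_eq_nil_iff.mp (hw.trans flatMap_nil)) hR'
    | cons σ w => exact ⟨σ, w, rfl⟩
  rw [flatMap_cons, flatMap_cons] at hw
  exact (eq_of_block_append_eq (fun he => headLetter_fst_ne_lastLetter_fst hab σ
    (congrArg Prod.fst he)) hw.symm)

theorem eq_and_mem_range_blockHom_of_conj [DecidableEq α] (hab : a ≠ b) {m₁ m₂ : ℕ} (hm₂ : 0 < m₂)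
    {g : FreeGroup α}
    (h : conjSubgroup g (blockHom a b m₁).range ⊓ (blockHom a b m₂).range ≠ ⊥) :
    m₁ = m₂ ∧ g ∈ (blockHom a b m₁).range := by
  obtain ⟨_, hz, hz₁⟩ := (Subgroup.bot_or_exists_ne_one _).resolve_left h
  obtain ⟨⟨_, ⟨w, rfl⟩, rfl⟩, w', hw'⟩ := Subgroup.mem_inf.mp hz
  simp only [MulEquiv.coe_toMonoidHom, MulAut.conj_apply] at hz₁ hw'
  obtain ⟨k, R, hR, rfl⟩ := exists_eq_conj_mk_isCyclicallyReduced w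
  obtain ⟨k', R', hR', rfl⟩ := exists_eq_conj_mk_isCyclicallyReduced w'
  simp only [_root_.map_mul, _root_.map_inv, blockHom_mk] at hz₁ hw'
  have hR₀ : R ≠ [] := by
    rintro rfl
    simp [← one_eq_mk] at hz₁
  set φ₁ := blockHom a b m₁
  set φ₂ := blockHom a b m₂
  have hconj : ((φ₂ k')⁻¹ * g * φ₁ k) * mk (R.flatMap (code a b m₁)) *
      ((φ₂ k')⁻¹ * g * φ₁ k)⁻¹ = mk (R'.flatMap (code a b m₂)) :=
    calc _ = (φ₂ k')⁻¹ * (g * (φ₁ k * mk (R.flatMap (code a b m₁)) * (φ₁ k)⁻¹) * g⁻¹) * φ₂ k' := by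
          group
      _ = _ := by rw [← hw']; group
  obtain ⟨j, d, e, h₁, h₂, hf⟩ := isRotationConj_of_conj
    (isCyclicallyReduced_flatMap_code hab m₁ hR) (flatMap_code_eq_nil_iff.not.mpr hR₀)
    (isCyclicallyReduced_flatMap_code hab m₂ hR') hconj
  obtain ⟨rfl, v, rfl⟩ := eq_and_exists_eq_flatMap_of_rotation hab hm₂ hR₀ h₁ h₂
  rw [← blockHom_mk, ← blockHom_mk] at hf
  have hg : g = φ₁ k' * ((φ₁ k')⁻¹ * g * φ₁ k) * (φ₁ k)⁻¹ := by group
  have mem (x) : φ₁ x ∈ φ₁.range := ⟨x, rfl⟩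
  rw [hg, hf]
  exact ⟨rfl, mul_mem (mul_mem (mem _) (mul_mem (zpow_mem (mem _) j) (mem _))) (inv_mem (mem _))⟩

end FreeGroup

/-- Lemma 3.9 (free case): a free group of rank `n ≥ 2` contains, for every `k`, a
malnormal collection of `k` subgroups, each free of rank 2 and of infinite index. -/
theorem exists_malnormal_collection_of_free (n : ℕ) (hn : 2 ≤ n) (k : ℕ) :
    ∃ H : Fin k → Subgroup (FreeGroup (Fin n)),
      IsMalnormalCollection H ∧
      ∀ i : Fin k,
        (∃ ψ : FreeGroup (Fin 2) →* FreeGroup (Fin n),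
          Function.Injective ψ ∧ ψ.range = H i) ∧
        (H i).index = 0 := by
  have hab : (⟨0, by omega⟩ : Fin n) ≠ ⟨1, by omega⟩ := by simp
  refine ⟨fun i => (FreeGroup.blockHom _ _ (i.1 + 1)).range, fun i j g h => ?_, fun i =>
    ⟨⟨_, FreeGroup.blockHom_injective hab _, rfl⟩, FreeGroup.index_range_blockHom hab _⟩⟩
  obtain ⟨hij, hg⟩ := FreeGroup.eq_and_mem_range_blockHom_of_conj hab j.1.succ_pos h
  exact ⟨Fin.ext (by omega), hg⟩
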